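/- Let F : ℝ^d → ℝ be M-smooth and let ĝ be any vector with ‖∇F(x) − ĝ‖ ≤ χ. If step size η ≤ 1/M, ‖∇F(x)‖ ≥ 4χ, and x⁺ = x − η·ĝ, then F(x⁺) − F(x) ≤ −(η/6)‖ĝ‖². -/

import Mathlib

/-!
Smoothness gives the quadratic upper bound
`F (x - η • g) ≤ F x - η ⟪∇ F x, g⟫ + (M / 2) η² ‖g‖²`, and `M η ≤ 1` bounds the last term by
`(η / 2) ‖g‖²`. Since `‖g‖ ≥ ‖∇ F x‖ - χ ≥ 3χ`, the error `⟪∇ F x - g, g⟫ ≥ -χ ‖g‖` is at most a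
third of `‖g‖²`, so `⟪∇ F x, g⟫ ≥ (2 / 3) ‖g‖²`, and `2 / 3 - 1 / 2 = 1 / 6`.
-/

open Set
open scoped Gradient RealInnerProductSpace

section Descent

variable {E : Type*} [NormedAddCommGroup E] [InnerProductSpace ℝ E] [CompleteSpace E]
  {F : E → ℝ} {M : ℝ}

theorem hasDerivAt_comp_add_smul {x v : E} {t : ℝ} (hF : DifferentiableAt ℝ F (x + t • v)) :
    HasDerivAt (fun s : ℝ => F (x + s • v)) ⟪∇ F (x + t • v), v⟫ t := by
  have hline : HasDerivAt (fun s : ℝ => x + s • v) v t := by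
    simpa using ((hasDerivAt_id t).smul_const v).const_add x
  rw [inner_gradient_left]
  exact hF.hasFDerivAt.comp_hasDerivAt t hline

theorem le_add_inner_gradient_add_of_lipschitz_gradient (hF : Differentiable ℝ F)
    (hL : ∀ x y, ‖∇ F x - ∇ F y‖ ≤ M * ‖x - y‖) (x v : E) :
    F (x + v) ≤ F x + ⟪∇ F x, v⟫ + M / 2 * ‖v‖ ^ 2 := by
  set φ : ℝ → ℝ := fun t => F (x + t • v) - t * ⟪∇ F x, v⟫ - M / 2 * ‖v‖ ^ 2 * t ^ 2
  have hφ (t : ℝ) : HasDerivAt φ (⟪∇ F (x + t • v) - ∇ F x, v⟫ - M * ‖v‖ ^ 2 * t) t := by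
    have h := (((hasDerivAt_comp_add_smul (hF (x + t • v))).sub
      ((hasDerivAt_id t).mul_const ⟪∇ F x, v⟫)).sub
      ((hasDerivAt_pow 2 t).const_mul (M / 2 * ‖v‖ ^ 2)))
    refine h.congr_deriv ?_
    rw [inner_sub_left]
    simp only [Nat.cast_ofNat]
    ring
  have hφ_nonpos : ∀ t ∈ interior (Icc (0 : ℝ) 1), deriv φ t ≤ 0 := by
    intro t ht
    rw [interior_Icc] at ht
    have hgrad : ‖∇ F (x + t • v) - ∇ F x‖ ≤ M * (t * ‖v‖) := by
      simpa [norm_smul, abs_of_pos ht.1] using hL (x + t • v) x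
    have hinner := real_inner_le_norm (∇ F (x + t • v) - ∇ F x) v
    rw [(hφ t).deriv]
    nlinarith [mul_le_mul_of_nonneg_right hgrad (norm_nonneg v)]
  have hanti : AntitoneOn φ (Icc 0 1) :=
    antitoneOn_of_deriv_nonpos (convex_Icc 0 1)
      (fun t _ => (hφ t).continuousAt.continuousWithinAt)
      (fun t _ => (hφ t).differentiableAt.differentiableWithinAt) hφ_nonpos
  have h01 : φ 1 ≤ φ 0 := hanti (left_mem_Icc.2 zero_le_one) (right_mem_Icc.2 zero_le_one)
    zero_le_one
  simp only [φ, one_smul, zero_smul, add_zero] at h01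
  linarith

end Descent

theorem two_thirds_mul_norm_sq_le_inner {E : Type*} [NormedAddCommGroup E]
    [InnerProductSpace ℝ E] {G g : E} {χ : ℝ} (hest : ‖G - g‖ ≤ χ) (hG : 4 * χ ≤ ‖G‖) :
    2 / 3 * ‖g‖ ^ 2 ≤ ⟪G, g⟫ := by
  have hg : 3 * χ ≤ ‖g‖ := by linarith [norm_sub_norm_le G g]
  have herr : -(χ * ‖g‖) ≤ ⟪G - g, g⟫ :=
    calc -(χ * ‖g‖) ≤ -(‖G - g‖ * ‖g‖) := by gcongr
      _ ≤ ⟪G - g, g⟫ := neg_le_of_abs_le (abs_real_inner_le_norm _ _)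
  have hsplit : ⟪G, g⟫ = ‖g‖ ^ 2 + ⟪G - g, g⟫ := by
    rw [inner_sub_left, real_inner_self_eq_norm_sq]
    ring
  nlinarith [norm_nonneg g]

theorem stmt_4_general {d : ℕ} (F : EuclideanSpace ℝ (Fin d) → ℝ) (M η χ : ℝ)
    (hdiff : Differentiable ℝ F)
    (hsmooth : ∀ x y, ‖gradient F x - gradient F y‖ ≤ M * ‖x - y‖)
    (hη : 0 < η) (hηM : η ≤ 1 / M)
    (x g : EuclideanSpace ℝ (Fin d))
    (hest : ‖gradient F x - g‖ ≤ χ) (hgrad : 4 * χ ≤ ‖gradient F x‖) :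
    F (x - η • g) - F x ≤ -(η / 6) * ‖g‖ ^ 2 := by
  have hM : 0 < M := one_div_pos.1 (hη.trans_le hηM)
  have hMη : M * η ≤ 1 := by rwa [le_div_iff₀ hM, mul_comm] at hηM
  have hdescent := le_add_inner_gradient_add_of_lipschitz_gradient hdiff hsmooth x (-(η • g))
  rw [← sub_eq_add_neg, inner_neg_right, real_inner_smul_right, norm_neg, norm_smul,
    Real.norm_of_nonneg hη.le] at hdescent
  have hinner := two_thirds_mul_norm_sq_le_inner hest hgrad
  have hquad : M / 2 * (η * ‖g‖) ^ 2 ≤ η / 2 * ‖g‖ ^ 2 := by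
    have : M / 2 * (η * ‖g‖) ^ 2 = M * η * (η / 2 * ‖g‖ ^ 2) := by ring
    rw [this]
    exact mul_le_of_le_one_left (by positivity) hMη
  linarith [mul_le_mul_of_nonneg_left hinner hη.le]

/-- If `‖∇F(x) - ĝ‖ ≤ χ`, `‖∇F(x)‖ ≥ 4χ`, `η ≤ 1/M`, and `x⁺ = x - η ĝ`, then
`F(x⁺) - F(x) ≤ -(η/6)‖ĝ‖²`. -/
theorem stmt_4 {d : ℕ} (F : EuclideanSpace ℝ (Fin d) → ℝ) (M η χ : ℝ)
    (hdiff : Differentiable ℝ F)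
    (hsmooth : ∀ x y, ‖gradient F x - gradient F y‖ ≤ M * ‖x - y‖)
    (hη : 0 < η) (hηM : η ≤ 1 / M) (hM : 0 < M)
    (x g : EuclideanSpace ℝ (Fin d))
    (hest : ‖gradient F x - g‖ ≤ χ) (hgrad : 4 * χ ≤ ‖gradient F x‖) :
    F (x - η • g) - F x ≤ -(η / 6) * ‖g‖ ^ 2 :=
  stmt_4_general F M η χ hdiff hsmooth hη hηM x g hest hgrad
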